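/- Let D be a degree-zero 1-cocycle of the Witt algebra with coefficients in 𝓕_α ⊗ 𝓕_β with D(L_0) = 0, and write D(L_n) = Σ_i a_{n,i} v_i ⊗ w_{n-i}. Then for all m, i ∈ ℤ: (i + m - mα) a_{m, i+m} - (i - m + mβ) a_{m,i} = (i - m + mα) a_{-m, i-m} - (i + m - mβ) a_{-m, i}. -/

import Mathlib

/-- The action of the Witt basis element `L m` on `𝓕_α ⊗ 𝓕_β`, realized on
`(ℤ × ℤ) →₀ ℂ` with basis `v_i ⊗ w_j ↦ single (i, j) 1`:
`L_m · (v_i ⊗ w_j) = -(i + αm) v_{m+i} ⊗ w_j - (j + βm) v_i ⊗ w_{m+j}`. -/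
noncomputable def tact (α β : ℂ) (m : ℤ) : ((ℤ × ℤ) →₀ ℂ) →ₗ[ℂ] ((ℤ × ℤ) →₀ ℂ) :=
  Finsupp.lsum ℂ fun p => LinearMap.toSpanSingleton ℂ ((ℤ × ℤ) →₀ ℂ)
    ((-((p.1 : ℂ) + α * m)) • Finsupp.single (m + p.1, p.2) (1 : ℂ)
      + (-((p.2 : ℂ) + β * m)) • Finsupp.single (p.1, m + p.2) (1 : ℂ))

/-- A family `d n = d(L_n)` is a 1-cocycle of the Witt algebra with
coefficients in `𝓕_α ⊗ 𝓕_β`: `d([L_m, L_n]) = L_m · d(L_n) - L_n · d(L_m)`. -/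
def IsCocycle (α β : ℂ) (d : ℤ → ((ℤ × ℤ) →₀ ℂ)) : Prop :=
  ∀ m n : ℤ, ((m - n : ℤ) : ℂ) • d (m + n) = tact α β m (d n) - tact α β n (d m)

/-- `d` is a 1-coboundary: `d(L_n) = L_n · u` for a fixed `u` in the module. -/
def IsCoboundary (α β : ℂ) (d : ℤ → ((ℤ × ℤ) →₀ ℂ)) : Prop :=
  ∃ u : (ℤ × ℤ) →₀ ℂ, ∀ n : ℤ, d n = tact α β n u

/-! The proof applies the cocycle identity to `[L_m, L_{-m}] = 2m L_0`: since `D(L_0) = 0`, this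
gives `L_m · D(L_{-m}) = L_{-m} · D(L_m)`, and the identity is the coefficient of `v_i ⊗ w_{-i}`
on both sides. -/

theorem tact_apply (α β : ℂ) (m : ℤ) (x : (ℤ × ℤ) →₀ ℂ) (a b : ℤ) :
    tact α β m x (a, b)
      = -(((a - m : ℤ) : ℂ) + α * m) * x (a - m, b)
        - (((b - m : ℤ) : ℂ) + β * m) * x (a, b - m) := by
  have shift_fst (p : ℤ × ℤ) : (m + p.1, p.2) = (a, b) ↔ p = (a - m, b) := by
    obtain ⟨p₁, p₂⟩ := p
    simp only [Prod.mk.injEq]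
    omega
  have shift_snd (p : ℤ × ℤ) : (p.1, m + p.2) = (a, b) ↔ p = (a, b - m) := by
    obtain ⟨p₁, p₂⟩ := p
    simp only [Prod.mk.injEq]
    omega
  rw [tact, Finsupp.lsum_apply, Finsupp.sum_apply, Finsupp.sum]
  simp only [LinearMap.toSpanSingleton_apply, Finsupp.smul_apply, Finsupp.add_apply,
    Finsupp.single_apply, smul_eq_mul, shift_fst, shift_snd, mul_add, mul_ite, mul_one, mul_zero]
  rw [Finset.sum_add_distrib, Finset.sum_ite_eq', Finset.sum_ite_eq']
  split_ifs <;> simp_all <;> ring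

theorem IsCocycle.tact_neg_comm {α β : ℂ} {d : ℤ → ((ℤ × ℤ) →₀ ℂ)} (hd : IsCocycle α β d)
    (hd₀ : d 0 = 0) (m : ℤ) : tact α β m (d (-m)) = tact α β (-m) (d m) := by
  have h := hd m (-m)
  rwa [add_neg_cancel, hd₀, smul_zero, eq_comm, sub_eq_zero] at h

theorem degree_zero_cocycle_coeff_identity_general (α β : ℂ)
    (D : ℤ → ((ℤ × ℤ) →₀ ℂ)) (hD : IsCocycle α β D)
    (h0 : D 0 = 0) :
    ∀ m i : ℤ,
      (((i + m : ℤ) : ℂ) - m * α) * (D m) (i + m, -i)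
          - (((i - m : ℤ) : ℂ) + m * β) * (D m) (i, m - i)
        = (((i - m : ℤ) : ℂ) + m * α) * (D (-m)) (i - m, -i)
          - (((i + m : ℤ) : ℂ) - m * β) * (D (-m)) (i, -m - i) := by
  intro m i
  have h := congrArg (· (i, -i)) (hD.tact_neg_comm h0 m)
  simp only [tact_apply, sub_neg_eq_add, neg_add_eq_sub] at h
  rw [show -i - m = -m - i by ring] at h
  push_cast at h ⊢
  linear_combination h

/-- for a degree-zero 1-cocycle `D` with `D(L_0) = 0`, writing
`a_{n,i}` for the coefficient of `v_i ⊗ w_{n-i}` in `D(L_n)`, one has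
`(i+m-mα) a_{m,i+m} - (i-m+mβ) a_{m,i} = (i-m+mα) a_{-m,i-m} - (i+m-mβ) a_{-m,i}`. -/
theorem degree_zero_cocycle_coeff_identity (α β : ℂ)
    (D : ℤ → ((ℤ × ℤ) →₀ ℂ)) (hD : IsCocycle α β D)
    (hdeg : ∀ m : ℤ, ∀ p ∈ (D m).support, p.1 + p.2 = m)
    (h0 : D 0 = 0) :
    ∀ m i : ℤ,
      (((i + m : ℤ) : ℂ) - m * α) * (D m) (i + m, -i)
          - (((i - m : ℤ) : ℂ) + m * β) * (D m) (i, m - i)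
        = (((i - m : ℤ) : ℂ) + m * α) * (D (-m)) (i - m, -i)
          - (((i + m : ℤ) : ℂ) - m * β) * (D (-m)) (i, -m - i) :=
  degree_zero_cocycle_coeff_identity_general α β D hD h0
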